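/- arXiv:2404.06252 — 3 statements merged into one kernel-verified Lean document; each statement's English description precedes it below -/
import Mathlib

section
/- Consider the profile x on n ≥ 6 agents (n even) with one agent at 0, one at 1, n/2 − 1 agents at ε, and n/2 − 1 agents at 1 − ε, where 0 < ε < 1/4. If a pair of facility locations {l1, l2} satisfies l1 = l2, then its social cost on x is at least (n/2)·ε. -/
/-!
Pair each agent `i` with its mirror `Fin.rev i`: the hard profile is symmetric about `1/2`, so the
two positions of a pair differ by `|1 - 2 xᵢ| ≥ 2ε`. A single facility serves both agents of a pair
at total cost at least their distance, so summing over all pairs counts every agent twice and gives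
`2 · SC ≥ n · 2ε`.
-/

noncomputable def cost2 (p : ℝ × ℝ) (y : ℝ) : ℝ := min |p.1 - y| |p.2 - y|

noncomputable def SC {n : ℕ} (p : ℝ × ℝ) (x : Fin n → ℝ) : ℝ := ∑ i, cost2 p (x i)

noncomputable def OPT {n : ℕ} (x : Fin n → ℝ) : ℝ :=
  sInf {c | ∃ l1 l2 : ℝ, c = SC (l1, l2) x}

/-- One agent at `0`, one at `1`, `n/2 - 1` agents at `ε`, `n/2 - 1` agents at `1 - ε`. -/
noncomputable def hardProfile (n : ℕ) (ε : ℝ) : Fin n → ℝ := fun i =>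
  if (i : ℕ) = 0 then 0 else if (i : ℕ) = n - 1 then 1
  else if (i : ℕ) < n / 2 then ε else 1 - ε

lemma SC_self {n : ℕ} (l : ℝ) (x : Fin n → ℝ) : SC (l, l) x = ∑ i, |l - x i| := by
  simp only [SC, cost2, min_self]

lemma sum_abs_sub_rev_le_two_mul_SC_self {n : ℕ} (l : ℝ) (x : Fin n → ℝ) :
    ∑ i, |x (Fin.rev i) - x i| ≤ 2 * SC (l, l) x := by
  have hrev : ∑ i, |l - x (Fin.rev i)| = ∑ i, |l - x i| :=
    Fintype.sum_equiv Fin.revPerm _ _ fun _ => rfl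
  calc ∑ i, |x (Fin.rev i) - x i|
      ≤ ∑ i, (|l - x (Fin.rev i)| + |l - x i|) :=
        Finset.sum_le_sum fun i _ => by
          simpa only [Real.dist_eq] using dist_triangle_left (x (Fin.rev i)) (x i) l
    _ = 2 * SC (l, l) x := by rw [Finset.sum_add_distrib, hrev, SC_self]; ring

lemma hardProfile_rev {n : ℕ} (ε : ℝ) (hne : Even n) (i : Fin n) :
    hardProfile n ε (Fin.rev i) = 1 - hardProfile n ε i := by
  obtain ⟨k, rfl⟩ := hne
  have hi := i.isLt
  simp only [hardProfile, Fin.val_rev]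
  split_ifs <;> first | ring1 | (exfalso; omega)

lemma two_mul_le_abs_one_sub_two_mul_hardProfile {n : ℕ} {ε : ℝ} (hε : ε < 1 / 4) (i : Fin n) :
    2 * ε ≤ |1 - 2 * hardProfile n ε i| := by
  simp only [hardProfile]
  split_ifs <;> rw [le_abs] <;> first | (left; linarith) | (right; linarith)

theorem stmt2_general (n : ℕ) (ε : ℝ) (hne : Even n)
    (hε0 : 0 < ε) (hε : ε < 1 / 4) (l1 l2 : ℝ) (hl : l1 = l2) :
    (n : ℝ) / 2 * ε ≤ SC (l1, l2) (hardProfile n ε) := by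
  subst hl
  have hpair (i : Fin n) :
      2 * ε ≤ |hardProfile n ε (Fin.rev i) - hardProfile n ε i| := by
    rw [hardProfile_rev ε hne, show ∀ y : ℝ, 1 - y - y = 1 - 2 * y from fun y => by ring]
    exact two_mul_le_abs_one_sub_two_mul_hardProfile hε i
  have hsum : (n : ℝ) * (2 * ε) ≤ 2 * SC (l1, l1) (hardProfile n ε) :=
    calc (n : ℝ) * (2 * ε) = ∑ _i : Fin n, 2 * ε := by simp
      _ ≤ _ := Finset.sum_le_sum fun i _ => hpair i
      _ ≤ _ := sum_abs_sub_rev_le_two_mul_SC_self l1 _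
  nlinarith [mul_nonneg n.cast_nonneg hε0.le]

/-- If the two facilities coincide, the social cost on the hard profile is at least `(n/2)·ε`. -/
theorem stmt2 (n : ℕ) (ε : ℝ) (hn : 6 ≤ n) (hne : Even n)
    (hε0 : 0 < ε) (hε : ε < 1 / 4) (l1 l2 : ℝ) (hl : l1 = l2) :
    (n : ℝ) / 2 * ε ≤ SC (l1, l2) (hardProfile n ε) :=
  stmt2_general n ε hne hε0 hε l1 l2 hl
end

section
/- Consider the profile x on n ≥ 6 agents (n even) with one agent at 0, one at 1, n/2 − 1 agents at ε, and n/2 − 1 agents at 1 − ε, where 0 < ε < 1/4. If a pair of facility locations {l1, l2} satisfies l1 ≤ 0 or l1 ≥ 1, then its social cost on x is at least (n/2 − 1)·ε. -/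
/-! The facility `l1` lies outside `(0, 1)`, so it is at distance at least `ε` from both clusters,
while `l2` is within `ε` of at most one of them, since they are `1 - 2ε > 2ε` apart. That
cluster of `n/2 - 1` agents alone then costs at least `(n/2 - 1)·ε`. -/

open Finset

lemma cost2_nonneg (p : ℝ × ℝ) (y : ℝ) : 0 ≤ cost2 p y :=
  le_min (abs_nonneg _) (abs_nonneg _)

lemma card_mul_le_SC {n : ℕ} (p : ℝ × ℝ) (x : Fin n → ℝ) (S : Finset (Fin n)) {c : ℝ}
    (hc : ∀ i ∈ S, c ≤ cost2 p (x i)) : #S * c ≤ SC p x :=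
  calc #S * c = ∑ _i ∈ S, c := by rw [sum_const, nsmul_eq_mul]
    _ ≤ ∑ i ∈ S, cost2 p (x i) := sum_le_sum hc
    _ ≤ SC p x := sum_le_sum_of_subset_of_nonneg (subset_univ S) fun i _ _ => cost2_nonneg p (x i)

lemma sub_mul_le_SC_of_Ico {n : ℕ} (p : ℝ × ℝ) (x : Fin n → ℝ) {a b : ℕ} (hb : b ≤ n)
    {c : ℝ} (hc : ∀ i : Fin n, (i : ℕ) ∈ Ico a b → c ≤ cost2 p (x i)) :
    ((b - a : ℕ) : ℝ) * c ≤ SC p x := by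
  have hlt : ∀ k ∈ Ico a b, k < n := fun k hk => (mem_Ico.1 hk).2.trans_le hb
  simpa only [card_attachFin, Nat.card_Ico] using
    card_mul_le_SC p x ((Ico a b).attachFin hlt) fun i hi => hc i (mem_attachFin hlt |>.1 hi)

lemma hardProfile_add_self_of_mem_Ico_one {m : ℕ} (ε : ℝ) {i : Fin (m + m)}
    (hi : (i : ℕ) ∈ Ico 1 m) : hardProfile (m + m) ε i = ε := by
  rw [mem_Ico] at hi
  simp [hardProfile, show (i : ℕ) ≠ 0 by omega, show (i : ℕ) ≠ m + m - 1 by omega,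
    show (i : ℕ) < (m + m) / 2 by omega]

lemma hardProfile_add_self_of_mem_Ico_self {m : ℕ} (ε : ℝ) {i : Fin (m + m)}
    (hi : (i : ℕ) ∈ Ico m (m + m - 1)) : hardProfile (m + m) ε i = 1 - ε := by
  rw [mem_Ico] at hi
  simp [hardProfile, show (i : ℕ) ≠ 0 by omega, show (i : ℕ) ≠ m + m - 1 by omega,
    show ¬ (i : ℕ) < (m + m) / 2 by omega]

lemma le_abs_sub_of_mem_Icc {l y ε : ℝ} (hl : l ≤ 0 ∨ 1 ≤ l)
    (hy : y ∈ Set.Icc ε (1 - ε)) : ε ≤ |l - y| := by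
  obtain ⟨hεy, hy1⟩ := hy
  rw [le_abs]
  rcases hl with hl | hl
  · right; linarith
  · left; linarith

theorem stmt3_general (n : ℕ) (ε : ℝ) (hn : 6 ≤ n) (hne : Even n)
    (hε : ε < 1 / 4) (l1 l2 : ℝ) (hl : l1 ≤ 0 ∨ 1 ≤ l1) :
    ((n : ℝ) / 2 - 1) * ε ≤ SC (l1, l2) (hardProfile n ε) := by
  obtain ⟨m, rfl⟩ := hne
  have hsize : ((m + m : ℕ) : ℝ) / 2 - 1 = ((m - 1 : ℕ) : ℝ) := by
    push_cast [Nat.cast_sub (by omega : 1 ≤ m)]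
    ring
  rw [hsize]
  rcases le_or_gt l2 (1 / 2) with h2 | h2
  · have hfar : ε ≤ cost2 (l1, l2) (1 - ε) :=
      le_min (le_abs_sub_of_mem_Icc hl ⟨by linarith, le_rfl⟩) (le_abs.2 (Or.inr (by linarith)))
    simpa only [show m + m - 1 - m = m - 1 by omega] using
      sub_mul_le_SC_of_Ico (l1, l2) (hardProfile (m + m) ε) (a := m) (b := m + m - 1) (by omega)
        fun i hi => by rwa [hardProfile_add_self_of_mem_Ico_self ε hi]
  · have hfar : ε ≤ cost2 (l1, l2) ε :=
      le_min (le_abs_sub_of_mem_Icc hl ⟨le_rfl, by linarith⟩) (le_abs.2 (Or.inl (by linarith)))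
    exact sub_mul_le_SC_of_Ico (l1, l2) (hardProfile (m + m) ε) (a := 1) (b := m) (by omega)
      fun i hi => by rwa [hardProfile_add_self_of_mem_Ico_one ε hi]

/-- If one facility lies at or outside the extremes (`l1 ≤ 0` or `l1 ≥ 1`),
the social cost on the hard profile is at least `(n/2 - 1)·ε`. -/
theorem stmt3 (n : ℕ) (ε : ℝ) (hn : 6 ≤ n) (hne : Even n)
    (hε0 : 0 < ε) (hε : ε < 1 / 4) (l1 l2 : ℝ) (hl : l1 ≤ 0 ∨ 1 ≤ l1) :
    ((n : ℝ) / 2 - 1) * ε ≤ SC (l1, l2) (hardProfile n ε) :=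
  stmt3_general n ε hn hne hε l1 l2 hl
end

section
/- Mechanism 2 (with parameters k ≥ 2, a ∈ (0,1), dictator t, extended to general profiles by scale-freeness) is strategy-proof: no agent can strictly decrease her cost by misreporting her location. -/
/-- Mechanism 2 with parameters `k`, `a` and dictator `t`, extended to general
profiles by translation and scaling.  With `x_l` the leftmost location, `x_r` the
rightmost and `L = x_r - x_l`: if `x_t` lies in the first `a`-fraction of the range,
`l2 = x_t + max((1-a)k/a·(x_t - x_l), x_r - x_t)`; otherwise
`l2 = x_t - max(x_t - x_l, ak/(1-a)·(x_r - x_t))`. -/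
noncomputable def mech2 {n : ℕ} (k a : ℝ) (t : Fin n) (x : Fin n → ℝ) : ℝ × ℝ :=
  let xl := Finset.univ.inf' ⟨t, Finset.mem_univ t⟩ x
  let xr := Finset.univ.sup' ⟨t, Finset.mem_univ t⟩ x
  let L := xr - xl
  (x t,
    if x t < xl + a * L then x t + max ((1 - a) * k / a * (x t - xl)) (xr - x t)
    else x t - max (x t - xl) (a * k / (1 - a) * (xr - x t)))

open Finset

section Extremes

variable {ι α : Type*} [DecidableEq ι] [LinearOrder α]

lemma Finset.univ_inf'_eq_min_inf'_erase [Fintype ι] (f : ι → α) (i : ι)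
    (hu : (univ : Finset ι).Nonempty) (he : (univ.erase i).Nonempty) :
    univ.inf' hu f = min (f i) ((univ.erase i).inf' he f) := by
  rw [← inf'_insert he f, inf'_congr hu (insert_erase (mem_univ i)).symm fun _ _ => rfl]

lemma Finset.univ_sup'_eq_max_sup'_erase [Fintype ι] (f : ι → α) (i : ι)
    (hu : (univ : Finset ι).Nonempty) (he : (univ.erase i).Nonempty) :
    univ.sup' hu f = max (f i) ((univ.erase i).sup' he f) := by
  rw [← sup'_insert he f, sup'_congr hu (insert_erase (mem_univ i)).symm fun _ _ => rfl]

lemma Finset.inf'_update_of_notMem {s : Finset ι} {i : ι} (hi : i ∉ s) (hs : s.Nonempty)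
    (f : ι → α) (y : α) : s.inf' hs (Function.update f i y) = s.inf' hs f :=
  inf'_congr hs rfl fun _ hj => Function.update_of_ne (ne_of_mem_of_not_mem hj hi) y f

lemma Finset.sup'_update_of_notMem {s : Finset ι} {i : ι} (hi : i ∉ s) (hs : s.Nonempty)
    (f : ι → α) (y : α) : s.sup' hs (Function.update f i y) = s.sup' hs f :=
  sup'_congr hs rfl fun _ hj => Function.update_of_ne (ne_of_mem_of_not_mem hj hi) y f

end Extremes

/-- Both branches of Mechanism 2 are admitted on the boundary `p = xl + a (xr - xl)`; with this
tie-break the notion is invariant under the reflection `x ↦ -x`, `a ↦ 1 - a`. -/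
def IsSecondFacility (k a p xl xr l : ℝ) : Prop :=
  (l = p + max ((1 - a) * k / a * (p - xl)) (xr - p) ∧ (1 - a) * (p - xl) ≤ a * (xr - p)) ∨
    (l = p - max (p - xl) (a * k / (1 - a) * (xr - p)) ∧ a * (xr - p) ≤ (1 - a) * (p - xl))

lemma IsSecondFacility.neg {k a p xl xr l : ℝ} (h : IsSecondFacility k a p xl xr l) :
    IsSecondFacility k (1 - a) (-p) (-xr) (-xl) (-l) := by
  unfold IsSecondFacility
  rw [sub_sub_cancel]
  rcases h with ⟨rfl, h⟩ | ⟨rfl, h⟩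
  · exact Or.inr ⟨by rw [max_comm]; ring_nf, by linarith⟩
  · exact Or.inl ⟨by rw [max_comm]; ring_nf, by linarith⟩

lemma isSecondFacility_mech2 {n : ℕ} (k a : ℝ) (t : Fin n) {x : Fin n → ℝ} {xl xr : ℝ}
    (hxl : univ.inf' ⟨t, mem_univ t⟩ x = xl) (hxr : univ.sup' ⟨t, mem_univ t⟩ x = xr) :
    IsSecondFacility k a (x t) xl xr (mech2 k a t x).2 := by
  subst hxl hxr
  dsimp only [mech2, IsSecondFacility]
  split_ifs
  · exact Or.inl ⟨rfl, by linarith⟩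
  · exact Or.inr ⟨rfl, by linarith⟩

lemma abs_min_sub_le_abs_sub {α : Type*} [AddCommGroup α] [LinearOrder α] [IsOrderedAddMonoid α]
    {z w l : α} (hl : l ≤ w) : |min z w - z| ≤ |l - z| := by
  rcases le_total z w with h | h
  · simp [min_eq_left h]
  · rw [min_eq_right h, abs_of_nonpos (sub_nonpos.2 h), abs_of_nonpos (sub_nonpos.2 (hl.trans h))]
    exact neg_le_neg (sub_le_sub_right hl z)

section Strategyproof

variable {k a p m M z z' l l' : ℝ}

lemma min_abs_sub_le_of_le (hk : 2 ≤ k) (ha0 : 0 < a) (ha1 : a < 1) (hpM : p ≤ M)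
    (hzp : z ≤ p)
    (hl : IsSecondFacility k a p (min z m) (max z M) l)
    (hl' : IsSecondFacility k a p (min z' m) (max z' M) l') :
    min |p - z| |l - z| ≤ |l' - z| := by
  rw [max_eq_right (hzp.trans hpM)] at hl
  have hMM' : M ≤ max z' M := le_max_right _ _
  rcases hl' with ⟨rfl, -⟩ | ⟨rfl, -⟩
  · have hM' := le_max_right ((1 - a) * k / a * (p - min z' m)) (max z' M - p)
    calc min |p - z| |l - z| ≤ |p - z| := min_le_left _ _
      _ = p - z := abs_of_nonneg (by linarith)
      _ ≤ _ := by linarith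
      _ ≤ _ := le_abs_self _
  have h1a : 0 < 1 - a := by linarith
  have hc : 0 ≤ a * k / (1 - a) := by positivity
  rcases hl with ⟨-, hright⟩ | ⟨rfl, -⟩
  · have hkc : k * (p - z) ≤ a * k / (1 - a) * (M - p) := by
      have : (1 - a) * (p - z) ≤ a * (M - p) := by nlinarith [min_le_left z m]
      rw [div_mul_eq_mul_div, le_div_iff₀ h1a]
      nlinarith
    have hcM : a * k / (1 - a) * (M - p) ≤
        max (p - min z' m) (a * k / (1 - a) * (max z' M - p)) :=
      le_max_of_le_right (by gcongr)
    have h2k : 2 * (p - z) ≤ k * (p - z) := by nlinarith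
    calc min |p - z| |l - z| ≤ |p - z| := min_le_left _ _
      _ = p - z := abs_of_nonneg (by linarith)
      _ ≤ _ := by linarith
      _ ≤ _ := neg_le_abs _
  · have hl_eq : p - max (p - min z m) (a * k / (1 - a) * (M - p)) =
        min z (p - max (p - m) (a * k / (1 - a) * (M - p))) := by
      simp only [min_def, max_def]
      split_ifs <;> linarith
    rw [hl_eq]
    refine (min_le_right _ _).trans (abs_min_sub_le_abs_sub (sub_le_sub_left ?_ p))
    exact max_le_max (by linarith [min_le_right z' m]) (by gcongr)

lemma min_abs_sub_le (hk : 2 ≤ k) (ha0 : 0 < a) (ha1 : a < 1) (hmp : m ≤ p) (hpM : p ≤ M)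
    (hl : IsSecondFacility k a p (min z m) (max z M) l)
    (hl' : IsSecondFacility k a p (min z' m) (max z' M) l') :
    min |p - z| |l - z| ≤ |l' - z| := by
  rcases le_total z p with hzp | hpz
  · exact min_abs_sub_le_of_le hk ha0 ha1 hpM hzp hl hl'
  · have hl_neg := hl.neg
    have hl'_neg := hl'.neg
    rw [← min_neg_neg, ← max_neg_neg] at hl_neg hl'_neg
    simpa only [neg_sub_neg, abs_sub_comm] using
      min_abs_sub_le_of_le hk (by linarith) (by linarith) (neg_le_neg hmp) (neg_le_neg hpz)
        hl_neg hl'_neg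

end Strategyproof

/-- Mechanism 2 (with `k ≥ 2`, `a ∈ (0,1)`, dictator `t`) is strategy-proof:
no agent can strictly decrease her cost by misreporting her location. -/
theorem stmt10 {n : ℕ} (k a : ℝ) (hk : 2 ≤ k) (ha0 : 0 < a) (ha1 : a < 1)
    (t : Fin n) :
    ∀ (i : Fin n) (x : Fin n → ℝ) (x' : ℝ),
      cost2 (mech2 k a t x) (x i) ≤ cost2 (mech2 k a t (Function.update x i x')) (x i) := by
  intro i x x'
  by_cases hit : i = t
  · subst hit
    have hzero : cost2 (mech2 k a i x) (x i) = 0 := by simp [cost2, mech2]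
    exact hzero ▸ le_min (abs_nonneg _) (abs_nonneg _)
  have hti : t ≠ i := Ne.symm hit
  have ht : t ∈ univ.erase i := mem_erase.2 ⟨hti, mem_univ t⟩
  have he : (univ.erase i).Nonempty := ⟨t, ht⟩
  set m := (univ.erase i).inf' he x
  set M := (univ.erase i).sup' he x
  have hl : IsSecondFacility k a (x t) (min (x i) m) (max (x i) M) (mech2 k a t x).2 :=
    isSecondFacility_mech2 k a t (univ_inf'_eq_min_inf'_erase x i _ he)
      (univ_sup'_eq_max_sup'_erase x i _ he)
  have hl' : IsSecondFacility k a (x t) (min x' m) (max x' M)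
      (mech2 k a t (Function.update x i x')).2 := by
    have := isSecondFacility_mech2 k a t (x := Function.update x i x')
      (univ_inf'_eq_min_inf'_erase _ i _ he) (univ_sup'_eq_max_sup'_erase _ i _ he)
    rwa [Function.update_self, inf'_update_of_notMem (notMem_erase i univ),
      sup'_update_of_notMem (notMem_erase i univ), Function.update_of_ne hti] at this
  show min |x t - x i| _ ≤ min |Function.update x i x' t - x i| _
  rw [Function.update_of_ne hti]
  exact le_min (min_le_left _ _)
    (min_abs_sub_le hk ha0 ha1 (inf'_le _ ht) (le_sup' _ ht) hl hl')
end
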